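/- For every finite bounded graded poset P, the augmented Chow polynomial is self-dual: G_P(t) = G_{P*}(t), where P* is the order dual of P. -/

import Mathlib

open Polynomial Finset

attribute [local instance] Classical.propDecidable

variable {P : Type*} [PartialOrder P] [Fintype P]

noncomputable local instance : LocallyFiniteOrder P := Fintype.toLocallyFiniteOrder

noncomputable def posetMu (S : Finset P) (x y : P) : ℤ :=
  if x = y then 1
  else -∑ z ∈ (S ∩ Finset.Ico x y).attach, posetMu S x z.1
termination_by (Finset.Icc x y).card
decreasing_by
  · have hz := (Finset.mem_inter.mp z.2).2
    rw [Finset.mem_Ico] at hz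
    refine Finset.card_lt_card ⟨Finset.Icc_subset_Icc_right hz.2.le, fun hsub => ?_⟩
    have := hsub (Finset.mem_Icc.mpr ⟨hz.1.trans hz.2.le, le_refl y⟩)
    exact absurd (Finset.mem_Icc.mp this).2 (not_le_of_gt hz.2)

noncomputable def posetChi (S : Finset P) (ρ : P → ℕ) (x y : P) : Polynomial ℝ :=
  ∑ z ∈ S ∩ Finset.Icc x y, C (posetMu S x z : ℝ) * X ^ (ρ y - ρ z)

noncomputable def posetChibar (S : Finset P) (ρ : P → ℕ) (x y : P) : Polynomial ℝ :=
  if x = y then -1 else posetChi S ρ x y /ₘ (X - C 1)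

noncomputable def posetChow (S : Finset P) (ρ : P → ℕ) (x y : P) : Polynomial ℝ :=
  if x = y then 1
  else ∑ z ∈ (S ∩ Finset.Ioc x y).attach, posetChibar S ρ x z.1 * posetChow S ρ z.1 y
termination_by (Finset.Icc x y).card
decreasing_by
  · have hz := (Finset.mem_inter.mp z.2).2
    rw [Finset.mem_Ioc] at hz
    refine Finset.card_lt_card ⟨Finset.Icc_subset_Icc_left hz.1.le, fun hsub => ?_⟩
    have := hsub (Finset.mem_Icc.mpr ⟨le_refl x, hz.1.le.trans hz.2⟩)
    exact absurd (Finset.mem_Icc.mp this).1 (not_le_of_gt hz.1)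

noncomputable def posetG (S : Finset P) (ρ : P → ℕ) (x y : P) : Polynomial ℝ :=
  ∑ z ∈ S ∩ Finset.Icc x y, X ^ (ρ z - ρ x) * posetChow S ρ z y

namespace AugChowAux

open Polynomial Finset

attribute [local instance] Classical.propDecidable

variable {Q : Type*} [PartialOrder Q] [Fintype Q]

/-! ### Matrices in the incidence algebra -/

noncomputable def Zm (ρ : Q → ℕ) : Matrix Q Q (Polynomial ℝ) :=
  Matrix.of fun x y => if x ≤ y then (X : Polynomial ℝ) ^ (ρ y - ρ x) else 0

noncomputable def Z1 : Matrix Q Q (Polynomial ℝ) :=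
  Matrix.of fun x y => if x ≤ y then 1 else 0

noncomputable def Mm : Matrix Q Q (Polynomial ℝ) :=
  Matrix.of fun x y => if x ≤ y then C ((posetMu (univ : Finset Q) x y : ℤ) : ℝ) else 0

noncomputable def Fm (ρ : Q → ℕ) : Matrix Q Q (Polynomial ℝ) :=
  Matrix.of fun x y => if x ≤ y then posetChibar (univ : Finset Q) ρ x y else 0

noncomputable def Xm (ρ : Q → ℕ) : Matrix Q Q (Polynomial ℝ) :=
  Matrix.of fun x y => if x ≤ y then posetChi (univ : Finset Q) ρ x y else 0

noncomputable def Hmx (ρ : Q → ℕ) : Matrix Q Q (Polynomial ℝ) :=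
  Matrix.of fun x y => if x ≤ y then posetChow (univ : Finset Q) ρ x y else 0

noncomputable def Gmx (ρ : Q → ℕ) : Matrix Q Q (Polynomial ℝ) :=
  Matrix.of fun x y => if x ≤ y then posetG (univ : Finset Q) ρ x y else 0

lemma sum_ite_interval (x y : Q) (f g : Q → Polynomial ℝ) :
    ∑ z : Q, (if x ≤ z then f z else 0) * (if z ≤ y then g z else 0)
      = ∑ z ∈ Finset.Icc x y, f z * g z := by
  have h : ∀ z : Q, (if x ≤ z then f z else 0) * (if z ≤ y then g z else 0)
      = if z ∈ Finset.Icc x y then f z * g z else 0 := by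
    intro z
    by_cases h1 : x ≤ z <;> by_cases h2 : z ≤ y <;>
      simp [Finset.mem_Icc, h1, h2]
  simp_rw [h]
  rw [Finset.sum_ite_mem, Finset.univ_inter]

/-! ### Basic facts about `posetMu` -/

lemma mu_self (x : Q) : posetMu (univ : Finset Q) x x = 1 := by
  rw [posetMu]; simp

lemma mu_lt {x y : Q} (h : x < y) :
    posetMu (univ : Finset Q) x y = -∑ z ∈ Finset.Ico x y, posetMu univ x z := by
  rw [posetMu, if_neg h.ne, Finset.sum_attach, Finset.univ_inter]

lemma mu_sum_Icc {x y : Q} (h : x < y) :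
    ∑ z ∈ Finset.Icc x y, posetMu (univ : Finset Q) x z = 0 := by
  rw [← Finset.Ico_insert_right h.le, Finset.sum_insert Finset.right_notMem_Ico,
    mu_lt h]
  ring

/-! ### The basic matrix identities -/

lemma Mm_mul_Z1 : (Mm : Matrix Q Q (Polynomial ℝ)) * Z1 = 1 := by
  ext x y : 1
  rw [Matrix.mul_apply]
  simp only [Mm, Z1, Matrix.of_apply]
  rw [sum_ite_interval]
  by_cases hxy : x ≤ y
  · rcases eq_or_lt_of_le hxy with rfl | hlt
    · rw [Finset.Icc_self, Finset.sum_singleton, mu_self, Matrix.one_apply_eq]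
      simp
    · rw [Matrix.one_apply_ne hlt.ne]
      have h0 := mu_sum_Icc hlt
      simp only [mul_one]
      rw [← map_sum]
      have hc : ∑ z ∈ Finset.Icc x y, ((posetMu (univ : Finset Q) x z : ℤ) : ℝ) = 0 := by
        rw [← Int.cast_sum, h0, Int.cast_zero]
      rw [hc, map_zero]
  · rw [Finset.Icc_eq_empty hxy, Finset.sum_empty,
      Matrix.one_apply_ne (by rintro rfl; exact hxy le_rfl)]

lemma Xm_eq_Mm_mul_Zm (ρ : Q → ℕ) : (Xm ρ : Matrix Q Q (Polynomial ℝ)) = Mm * Zm ρ := by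
  ext x y : 1
  rw [Matrix.mul_apply]
  simp only [Xm, Mm, Zm, Matrix.of_apply]
  rw [sum_ite_interval]
  by_cases hxy : x ≤ y
  · rw [if_pos hxy, posetChi, Finset.univ_inter]
  · rw [if_neg hxy, Finset.Icc_eq_empty hxy, Finset.sum_empty]

lemma chow_self (ρ : Q → ℕ) (x : Q) : posetChow (univ : Finset Q) ρ x x = 1 := by
  rw [posetChow]; simp

lemma chow_lt (ρ : Q → ℕ) {x y : Q} (h : x < y) :
    posetChow (univ : Finset Q) ρ x y
      = ∑ z ∈ Finset.Ioc x y, posetChibar univ ρ x z * posetChow univ ρ z y := by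
  rw [posetChow, if_neg h.ne, Finset.sum_attach ((univ : Finset Q) ∩ Finset.Ioc x y)
    (fun z => posetChibar univ ρ x z * posetChow univ ρ z y), Finset.univ_inter]

lemma Fm_mul_Hmx (ρ : Q → ℕ) : (Fm ρ : Matrix Q Q (Polynomial ℝ)) * Hmx ρ = -1 := by
  ext x y : 1
  rw [Matrix.mul_apply]
  simp only [Fm, Hmx, Matrix.of_apply]
  rw [sum_ite_interval]
  by_cases hxy : x ≤ y
  · rcases eq_or_lt_of_le hxy with rfl | hlt
    · rw [Finset.Icc_self, Finset.sum_singleton, chow_self, posetChibar, if_pos rfl]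
      simp
    · rw [← Finset.Ioc_insert_left hxy, Finset.sum_insert Finset.left_notMem_Ioc,
        posetChibar, if_pos rfl, ← chow_lt ρ hlt]
      simp [Matrix.one_apply_ne hlt.ne]
  · rw [Finset.Icc_eq_empty hxy, Finset.sum_empty]
    simp [Matrix.one_apply_ne (show x ≠ y by rintro rfl; exact hxy le_rfl)]

lemma chi_eval_one {ρ : Q → ℕ} {x y : Q} (h : x < y) :
    (posetChi (univ : Finset Q) ρ x y).eval 1 = 0 := by
  rw [posetChi, Finset.univ_inter]
  simp only [eval_finset_sum, eval_mul, eval_C, eval_pow, eval_X, one_pow, mul_one]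
  have := mu_sum_Icc h
  have h2 : ((∑ z ∈ Finset.Icc x y, posetMu (univ : Finset Q) x z : ℤ) : ℝ) = 0 := by
    rw [this]; simp
  push_cast at h2
  exact h2

lemma chi_factor {ρ : Q → ℕ} {x y : Q} (h : x < y) :
    posetChi (univ : Finset Q) ρ x y
      = (X - C 1) * posetChibar (univ : Finset Q) ρ x y := by
  rw [posetChibar, if_neg h.ne]
  have hmb := Polynomial.modByMonic_add_div (posetChi (univ : Finset Q) ρ x y)
    (X - C (1 : ℝ))
  rw [Polynomial.modByMonic_X_sub_C_eq_C_eval, chi_eval_one h, map_zero, zero_add] at hmb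
  exact hmb.symm

lemma smul_one_sub_Xm (ρ : Q → ℕ) :
    (X : Polynomial ℝ) • (1 : Matrix Q Q (Polynomial ℝ)) - Xm ρ = ((C 1 : Polynomial ℝ) - X) • Fm ρ := by
  ext x y : 1
  simp only [Matrix.sub_apply, Matrix.smul_apply, Xm, Fm, Matrix.of_apply, smul_eq_mul]
  by_cases hxy : x ≤ y
  · rcases eq_or_lt_of_le hxy with rfl | hlt
    · rw [if_pos le_rfl, if_pos le_rfl, Matrix.one_apply_eq, posetChibar, if_pos rfl,
        posetChi]
      simp only [mul_one]
      have : (univ : Finset Q) ∩ Finset.Icc x x = {x} := by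
        rw [Finset.univ_inter, Finset.Icc_self]
      rw [this, Finset.sum_singleton, mu_self]
      simp only [Int.cast_one, map_one, Nat.sub_self, pow_zero, mul_one, one_mul]
      ring
    · rw [if_pos hxy, if_pos hxy, Matrix.one_apply_ne hlt.ne, chi_factor hlt]
      ring
  · rw [if_neg hxy, if_neg hxy,
      Matrix.one_apply_ne (show x ≠ y by rintro rfl; exact hxy le_rfl)]
    simp

lemma key_identity (ρ : Q → ℕ) :
    ((X : Polynomial ℝ) • (1 : Matrix Q Q (Polynomial ℝ)) - Xm ρ) * Hmx ρ
      = ((X : Polynomial ℝ) - C 1) • (1 : Matrix Q Q (Polynomial ℝ)) := by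
  rw [smul_one_sub_Xm, Matrix.smul_mul, Fm_mul_Hmx]
  ext x y : 1
  simp only [Matrix.smul_apply, Matrix.neg_apply, smul_eq_mul]
  ring

lemma Gmx_eq_Zm_mul_Hmx (ρ : Q → ℕ) :
    (Gmx ρ : Matrix Q Q (Polynomial ℝ)) = Zm ρ * Hmx ρ := by
  ext x y : 1
  rw [Matrix.mul_apply]
  simp only [Gmx, Zm, Hmx, Matrix.of_apply]
  rw [sum_ite_interval]
  by_cases hxy : x ≤ y
  · rw [if_pos hxy, posetG, Finset.univ_inter]
  · rw [if_neg hxy, Finset.Icc_eq_empty hxy, Finset.sum_empty]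

lemma key_identity_chi (ρ : Q → ℕ) :
    ((X : Polynomial ℝ) • (1 : Matrix Q Q (Polynomial ℝ)) - Mm * Zm ρ) * Hmx ρ
      = ((X : Polynomial ℝ) - C 1) • (1 : Matrix Q Q (Polynomial ℝ)) := by
  rw [← Xm_eq_Mm_mul_Zm]; exact key_identity ρ

lemma main_eq (ρ : Q → ℕ) :
    ((X : Polynomial ℝ) • (1 : Matrix Q Q (Polynomial ℝ)) - Zm ρ * Mm) * Gmx ρ
      = ((X : Polynomial ℝ) - C 1) • Zm ρ := by
  rw [Gmx_eq_Zm_mul_Hmx]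
  have h1 : ((X : Polynomial ℝ) • (1 : Matrix Q Q (Polynomial ℝ)) - Zm ρ * Mm) * (Zm ρ * Hmx ρ)
      = Zm ρ * (((X : Polynomial ℝ) • (1 : Matrix Q Q (Polynomial ℝ)) - Mm * Zm ρ) * Hmx ρ) := by
    simp only [Matrix.sub_mul, Matrix.mul_sub, Matrix.smul_mul, Matrix.mul_smul,
      Matrix.one_mul, Matrix.mul_one, Matrix.mul_assoc]
  rw [h1, key_identity_chi, Matrix.mul_smul, Matrix.mul_one]

/-! ### Transpose to the dual poset -/

noncomputable def T (A : Matrix Qᵒᵈ Qᵒᵈ (Polynomial ℝ)) : Matrix Q Q (Polynomial ℝ) :=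
  Matrix.of fun x y => A (OrderDual.toDual y) (OrderDual.toDual x)

lemma T_mul (A B : Matrix Qᵒᵈ Qᵒᵈ (Polynomial ℝ)) : T (A * B) = T B * T A := by
  ext x y : 1
  rw [T, Matrix.of_apply, Matrix.mul_apply, Matrix.mul_apply]
  rw [← Equiv.sum_comp (OrderDual.toDual : Q ≃ Qᵒᵈ)
    (fun z => A (OrderDual.toDual y) z * B z (OrderDual.toDual x))]
  apply Finset.sum_congr rfl
  intro z _
  rw [T, T, Matrix.of_apply, Matrix.of_apply]
  ring

lemma T_one : T (1 : Matrix Qᵒᵈ Qᵒᵈ (Polynomial ℝ)) = 1 := by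
  ext x y : 1
  rw [T, Matrix.of_apply]
  by_cases h : x = y
  · subst h; simp
  · rw [Matrix.one_apply_ne (fun hc => h (OrderDual.toDual_inj.mp hc.symm)),
      Matrix.one_apply_ne h]

lemma T_smul (c : Polynomial ℝ) (A : Matrix Qᵒᵈ Qᵒᵈ (Polynomial ℝ)) :
    T (c • A) = c • T A := by
  ext x y; simp [T]

lemma T_sub (A B : Matrix Qᵒᵈ Qᵒᵈ (Polynomial ℝ)) : T (A - B) = T A - T B := by
  ext x y; simp [T]

lemma T_Z1 : T (Z1 : Matrix Qᵒᵈ Qᵒᵈ (Polynomial ℝ)) = (Z1 : Matrix Q Q (Polynomial ℝ)) := by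
  ext x y : 1
  simp only [T, Z1, Matrix.of_apply, OrderDual.toDual_le_toDual]

lemma T_Mm : T (Mm : Matrix Qᵒᵈ Qᵒᵈ (Polynomial ℝ)) = (Mm : Matrix Q Q (Polynomial ℝ)) := by
  have h1 : (Mm : Matrix Qᵒᵈ Qᵒᵈ (Polynomial ℝ)) * Z1 = 1 := Mm_mul_Z1
  have h2 := congrArg T h1
  rw [T_mul, T_one, T_Z1] at h2
  have h3 : (Z1 : Matrix Q Q (Polynomial ℝ)) * Mm = 1 :=
    mul_eq_one_comm.mp Mm_mul_Z1
  calc T (Mm : Matrix Qᵒᵈ Qᵒᵈ (Polynomial ℝ))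
      = 1 * T (Mm : Matrix Qᵒᵈ Qᵒᵈ (Polynomial ℝ)) := (Matrix.one_mul _).symm
    _ = (Mm * Z1) * T (Mm : Matrix Qᵒᵈ Qᵒᵈ (Polynomial ℝ)) := by rw [Mm_mul_Z1]
    _ = Mm * (Z1 * T (Mm : Matrix Qᵒᵈ Qᵒᵈ (Polynomial ℝ))) := Matrix.mul_assoc _ _ _
    _ = Mm * 1 := by rw [h2]
    _ = Mm := Matrix.mul_one _

/-! ### Rank function facts -/

lemma rank_mono (ρ : Q → ℕ) (hcov : ∀ x y : Q, x ⋖ y → ρ y = ρ x + 1) :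
    ∀ {x y : Q}, x ≤ y → ρ x ≤ ρ y := by
  suffices H : ∀ n : ℕ, ∀ x y : Q, x ≤ y → (Finset.Icc x y).card ≤ n → ρ x ≤ ρ y by
    intro x y h
    exact H (Finset.Icc x y).card x y h le_rfl
  intro n
  induction n with
  | zero =>
    intro x y h hc
    exfalso
    have : x ∈ Finset.Icc x y := Finset.mem_Icc.mpr ⟨le_rfl, h⟩
    have := Finset.card_pos.mpr ⟨x, this⟩
    omega
  | succ n ih =>
    intro x y h hc
    rcases eq_or_lt_of_le h with rfl | hlt
    · exact le_rfl
    · obtain ⟨z, hxz, hzy⟩ := hlt.exists_covby_le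
      have h1 : ρ z = ρ x + 1 := hcov _ _ hxz
      have hsub : Finset.Icc z y ⊆ Finset.Icc x y :=
        Finset.Icc_subset_Icc_left hxz.lt.le
      have hxnot : x ∉ Finset.Icc z y := by
        rw [Finset.mem_Icc]
        rintro ⟨hzx, -⟩
        exact absurd (hzx.trans_lt hxz.lt) (lt_irrefl z)
      have hcard : (Finset.Icc z y).card < (Finset.Icc x y).card :=
        Finset.card_lt_card ⟨hsub, fun hsub2 => hxnot
          (hsub2 (Finset.mem_Icc.mpr ⟨le_rfl, h⟩))⟩
      have h2 : ρ z ≤ ρ y := ih z y hzy (by omega)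
      omega

end AugChowAux

def IsRankFn [BoundedOrder P] (ρ : P → ℕ) : Prop :=
  ρ ⊥ = 0 ∧ ∀ x y : P, x ⋖ y → ρ y = ρ x + 1

/-- The augmented Chow polynomial is self-dual: for a finite bounded graded
poset `P` of rank `r`, `G_P = G_{P*}`, where the order dual `P*` is graded by
`x ↦ r - ρ(x)`. -/
theorem augChow_self_dual
    {P : Type*} [PartialOrder P] [Fintype P] [BoundedOrder P]
    (ρ : P → ℕ) (hρ : IsRankFn ρ) (r : ℕ) (hr : ρ (⊤ : P) = r) :
    posetG (Finset.univ : Finset P) ρ ⊥ ⊤ =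
      posetG (Finset.univ : Finset Pᵒᵈ)
        (fun z => r - ρ (OrderDual.ofDual z)) (⊥ : Pᵒᵈ) (⊤ : Pᵒᵈ) := by
  classical
  -- monotonicity and boundedness of the rank function
  have hmono : ∀ {x y : P}, x ≤ y → ρ x ≤ ρ y := AugChowAux.rank_mono ρ hρ.2
  have hbd : ∀ x : P, ρ x ≤ r := fun x => hr ▸ hmono le_top
  set ρ' : Pᵒᵈ → ℕ := fun z => r - ρ (OrderDual.ofDual z) with hρ'
  -- transposing the zeta matrix
  have hTZ : AugChowAux.T (AugChowAux.Zm ρ') = (AugChowAux.Zm ρ : Matrix P P (Polynomial ℝ)) := by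
    ext x y : 1
    simp only [AugChowAux.T, AugChowAux.Zm, Matrix.of_apply, OrderDual.toDual_le_toDual]
    by_cases h : x ≤ y
    · rw [if_pos h, if_pos h]
      have h1 : ρ x ≤ ρ y := hmono h
      have h2 : ρ y ≤ r := hbd y
      have he : ρ' (OrderDual.toDual x) - ρ' (OrderDual.toDual y) = ρ y - ρ x := by
        simp only [hρ', OrderDual.ofDual_toDual]
        omega
      rw [he]
    · rw [if_neg h, if_neg h]
  -- the dual identity, transposed
  have hdual := AugChowAux.main_eq (Q := Pᵒᵈ) ρ'
  have hdualT := congrArg AugChowAux.T hdual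
  rw [AugChowAux.T_mul, AugChowAux.T_sub, AugChowAux.T_smul] at hdualT
  erw [AugChowAux.T_one] at hdualT
  rw [AugChowAux.T_mul, AugChowAux.T_Mm, hTZ, AugChowAux.T_smul, hTZ] at hdualT
  -- hdualT : AugChowAux.T (AugChowAux.Gmx ρ') * (X • 1 - AugChowAux.Mm * AugChowAux.Zm ρ) = ((X : Polynomial ℝ) - C 1) • AugChowAux.Zm ρ
  have hmain := congrArg (fun A => A * AugChowAux.Hmx ρ) hdualT
  rw [Matrix.mul_assoc, AugChowAux.key_identity_chi, Matrix.mul_smul, Matrix.mul_one,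
    Matrix.smul_mul, ← AugChowAux.Gmx_eq_Zm_mul_Hmx] at hmain
  -- hmain : (X - C 1) • AugChowAux.T (AugChowAux.Gmx ρ') = (X - C 1) • AugChowAux.Gmx ρ
  have hcancel : AugChowAux.T (AugChowAux.Gmx ρ') = AugChowAux.Gmx ρ := by
    ext x y : 1
    have := congrFun (congrFun hmain x) y
    simp only [Matrix.smul_apply, smul_eq_mul] at this
    exact mul_left_cancel₀ (Polynomial.X_sub_C_ne_zero (1 : ℝ)) this
  have := congrFun (congrFun hcancel ⊥) ⊤
  simp only [AugChowAux.T, AugChowAux.Gmx, Matrix.of_apply] at this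
  rw [if_pos (OrderDual.toDual_le_toDual.mpr (bot_le : (⊥ : P) ≤ ⊤)),
    if_pos (bot_le : (⊥ : P) ≤ ⊤)] at this
  exact this.symm
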